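/- Let ψ ∈ L¹∩L²(ℝ) with ∫ψ = 0, let φ ∈ L¹∩L²(ℝ) with φ̂(0) = 1, and suppose the Littlewood–Paley identity ‖f⋆φ_J‖₂² + Σ_{j≤J}‖f⋆ψ_j‖₂² = ‖f‖₂² holds for all real-valued f ∈ L²(ℝ) and all J. Then for every n ≥ 0 and every real-valued f ∈ L²(ℝ): Σ_{p∈P_J, |p|<n} ‖S_J[p]f‖₂² + Σ_{p∈P_J, |p|=n} ‖U[p]f‖₂² = ‖f‖₂², where S_J[p]f = U[p]f⋆φ_J. In particular, Σ_{p∈P_J}‖S_J[p]f‖₂² = ‖f‖₂² if and only if Σ_{p∈P_J,|p|=n}‖U[p]f‖₂² → 0 as n → ∞. -/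

import Mathlib

/-!
Each `U[p]f` is again a real-valued function in `L²`: convolution with the integrable `ψ_j`
maps `L²` to `L²` (Young's inequality, via Cauchy–Schwarz and Tonelli), and taking the modulus
preserves this. So the Littlewood–Paley identity applies at every node `p` of the scattering tree
and splits `‖U[p]f‖₂²` into `‖S_J[p]f‖₂²` plus the energies of the children `U[p ++ [j]]f`.
Summing over the nodes of depth `< n` telescopes to the identity for each `n`. Its remainder, the
energy of depth `n`, equals `‖f‖₂²` minus a partial sum of `∑_p ‖S_J[p]f‖₂²`, so it tends to `0`
exactly when that series equals `‖f‖₂²`.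
-/

open MeasureTheory Real Complex FourierTransform ENNReal Filter

/-- Convolution of two functions on `ℝ`. -/
noncomputable def conv (f g : ℝ → ℂ) : ℝ → ℂ := fun t => ∫ s, f s * g (t - s)

/-- Dyadic dilation `g_j(t) = 2^{-j} g(2^{-j} t)`. -/
noncomputable def dil (g : ℝ → ℂ) (j : ℤ) : ℝ → ℂ :=
  fun t => ((2 : ℝ) ^ (-j) : ℝ) * g (((2 : ℝ) ^ (-j) : ℝ) * t)

/-- Scattering propagator: `U[∅]f = f`, `U[(j₁,…,jₘ)]f = |U[(j₁,…,j_{m−1})]f ⋆ ψ_{jₘ}|`. -/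
noncomputable def scatU (ψ : ℝ → ℂ) (p : List ℤ) (f : ℝ → ℂ) : ℝ → ℂ :=
  p.foldl (fun g j => fun t => (‖conv g (dil ψ j) t‖ : ℂ)) f

theorem sq_lintegral_mul_le_lintegral_sq_mul_mul_lintegral {α : Type*} [MeasurableSpace α]
    (μ : Measure α) {a w : α → ℝ≥0∞} (ha : AEMeasurable a μ) (hw : AEMeasurable w μ) :
    (∫⁻ x, a x * w x ∂μ) ^ 2 ≤ (∫⁻ x, a x ^ 2 * w x ∂μ) * ∫⁻ x, w x ∂μ := by
  -- Hölder with exponents `2, 2` applied to `a √w` and `√w`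
  set r : α → ℝ≥0∞ := fun x => w x ^ (1 / 2 : ℝ)
  have hr : ∀ x, r x ^ (2 : ℝ) = w x := fun x => by
    rw [← ENNReal.rpow_mul]; norm_num
  have hholder := ENNReal.lintegral_mul_le_Lp_mul_Lq μ Real.HolderConjugate.two_two
    (f := fun x => a x * r x) (g := r) (ha.mul (hw.pow_const _)) (hw.pow_const _)
  have hprod : ∀ x, a x * r x * r x = a x * w x := fun x => by
    rw [mul_assoc, ← ENNReal.rpow_add_of_nonneg _ _ (by norm_num) (by norm_num)]; norm_num
  have hsq : ∀ x, (a x * r x) ^ (2 : ℝ) = a x ^ 2 * w x := fun x => by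
    rw [ENNReal.mul_rpow_of_nonneg _ _ (by norm_num), hr, ENNReal.rpow_two]
  simp only [Pi.mul_apply, hprod, hsq, hr] at hholder
  calc (∫⁻ x, a x * w x ∂μ) ^ 2
      ≤ ((∫⁻ x, a x ^ 2 * w x ∂μ) ^ (1 / 2 : ℝ) * (∫⁻ x, w x ∂μ) ^ (1 / 2 : ℝ)) ^ 2 := by
        gcongr
    _ = (∫⁻ x, a x ^ 2 * w x ∂μ) * ∫⁻ x, w x ∂μ := by
        rw [← ENNReal.rpow_two, ENNReal.mul_rpow_of_nonneg _ _ (by norm_num),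
          ← ENNReal.rpow_mul, ← ENNReal.rpow_mul]
        norm_num

theorem lintegral_lintegral_mul_sub {G : Type*} [MeasurableSpace G] [AddGroup G]
    [MeasurableAdd₂ G] [MeasurableNeg G] {μ : Measure G} [SFinite μ] [μ.IsAddRightInvariant]
    {F H : G → ℝ≥0∞} (hF : AEMeasurable F μ) (hH : AEMeasurable H μ) :
    ∫⁻ x, ∫⁻ y, F y * H (x - y) ∂μ ∂μ = (∫⁻ y, F y ∂μ) * ∫⁻ x, H x ∂μ := by
  have hsub : AEMeasurable (fun p : G × G => H (p.1 - p.2)) (μ.prod μ) :=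
    hH.comp_quasiMeasurePreserving (quasiMeasurePreserving_sub_of_right_invariant μ μ)
  have hprod : AEMeasurable (Function.uncurry fun x y => F y * H (x - y)) (μ.prod μ) :=
    hF.comp_snd.mul hsub
  rw [lintegral_lintegral_swap hprod]
  have hinner : ∀ y, ∫⁻ x, F y * H (x - y) ∂μ = F y * ∫⁻ x, H x ∂μ := fun y => by
    rw [lintegral_const_mul'' _ (f := fun x => H (x - y)) (hH.comp_quasiMeasurePreserving
      (measurePreserving_sub_right μ y).quasiMeasurePreserving), lintegral_sub_right_eq_self H y]
  simp_rw [hinner]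
  exact lintegral_mul_const'' _ hF

theorem enorm_conv_sq_le {g k : ℝ → ℂ} (hg : AEStronglyMeasurable g)
    (hk : AEStronglyMeasurable k) (t : ℝ) :
    ‖conv g k t‖ₑ ^ 2 ≤ (∫⁻ s, ‖g s‖ₑ ^ 2 * ‖k (t - s)‖ₑ) * ∫⁻ s, ‖k s‖ₑ := by
  have hkt : AEMeasurable (fun s => ‖k (t - s)‖ₑ) :=
    hk.enorm.comp_quasiMeasurePreserving
      (Measure.measurePreserving_sub_left volume t).quasiMeasurePreserving
  calc ‖conv g k t‖ₑ ^ 2 ≤ (∫⁻ s, ‖g s‖ₑ * ‖k (t - s)‖ₑ) ^ 2 := by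
        gcongr
        exact (enorm_integral_le_lintegral_enorm _).trans_eq
          (lintegral_congr fun s => enorm_mul _ _)
    _ ≤ (∫⁻ s, ‖g s‖ₑ ^ 2 * ‖k (t - s)‖ₑ) * ∫⁻ s, ‖k (t - s)‖ₑ :=
        sq_lintegral_mul_le_lintegral_sq_mul_mul_lintegral _ hg.enorm hkt
    _ = (∫⁻ s, ‖g s‖ₑ ^ 2 * ‖k (t - s)‖ₑ) * ∫⁻ s, ‖k s‖ₑ := by
        rw [lintegral_sub_left_eq_self (fun s => ‖k s‖ₑ) t]

theorem lintegral_enorm_conv_sq_le {g k : ℝ → ℂ} (hg : AEStronglyMeasurable g)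
    (hk : Integrable k) :
    ∫⁻ t, ‖conv g k t‖ₑ ^ 2 ≤ (∫⁻ s, ‖g s‖ₑ ^ 2) * (∫⁻ s, ‖k s‖ₑ) ^ 2 :=
  calc ∫⁻ t, ‖conv g k t‖ₑ ^ 2
      ≤ ∫⁻ t, (∫⁻ s, ‖g s‖ₑ ^ 2 * ‖k (t - s)‖ₑ) * ∫⁻ s, ‖k s‖ₑ :=
        lintegral_mono (enorm_conv_sq_le hg hk.1)
    _ = (∫⁻ s, ‖g s‖ₑ ^ 2) * (∫⁻ s, ‖k s‖ₑ) ^ 2 := by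
        rw [lintegral_mul_const' _ _ hk.2.ne,
          lintegral_lintegral_mul_sub (hg.enorm.pow_const 2) hk.1.enorm, mul_assoc, sq]

theorem aestronglyMeasurable_conv {g k : ℝ → ℂ} (hg : AEStronglyMeasurable g)
    (hk : AEStronglyMeasurable k) : AEStronglyMeasurable (conv g k) :=
  (hg.convolution_integrand (ContinuousLinearMap.mul ℂ ℂ) hk).integral_prod_right'

theorem memLp_two_conv {g k : ℝ → ℂ} (hg : MemLp g 2) (hk : Integrable k) :
    MemLp (conv g k) 2 := by
  have hg2 := hg.eLpNorm_lt_top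
  rw [eLpNorm_lt_top_iff_lintegral_rpow_enorm_lt_top two_ne_zero ofNat_ne_top] at hg2
  refine ⟨aestronglyMeasurable_conv hg.1 hk.1, ?_⟩
  rw [eLpNorm_lt_top_iff_lintegral_rpow_enorm_lt_top two_ne_zero ofNat_ne_top]
  simp only [toReal_ofNat, ENNReal.rpow_two] at hg2 ⊢
  exact (lintegral_enorm_conv_sq_le hg.1 hk).trans_lt (mul_lt_top hg2 (pow_lt_top hk.2))

section LengthGrading

variable {β : Type*} (ℓ : β → ℕ) (Q : β → Prop)

def sigmaLengthEquiv : {x // Q x} ≃ Σ k, {x // ℓ x = k ∧ Q x} where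
  toFun x := ⟨ℓ x, x, rfl, x.2⟩
  invFun y := ⟨y.2, y.2.2.2⟩
  left_inv _ := rfl
  right_inv := by rintro ⟨_, x, rfl, hx⟩; rfl

def sigmaFinLengthEquiv (n : ℕ) : {x // ℓ x < n ∧ Q x} ≃ Σ k : Fin n, {x // ℓ x = k ∧ Q x} where
  toFun x := ⟨⟨ℓ x, x.2.1⟩, x, rfl, x.2.2⟩
  invFun y := ⟨y.2, by rw [y.2.2.1]; exact y.1.2, y.2.2.2⟩
  left_inv _ := rfl
  right_inv := by
    rintro ⟨⟨k, hk⟩, x, hx, hQ⟩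
    simp only at hx
    subst hx
    rfl

theorem tsum_subtype_eq_tsum_tsum_length (F : β → ℝ≥0∞) :
    ∑' x : {x // Q x}, F x = ∑' k, ∑' x : {x // ℓ x = k ∧ Q x}, F x := by
  rw [← ENNReal.tsum_sigma' fun y : Σ k, {x // ℓ x = k ∧ Q x} => F y.2]
  exact ((sigmaLengthEquiv ℓ Q).symm.tsum_eq fun x => F x).symm

theorem tsum_subtype_lt_eq_sum_range (F : β → ℝ≥0∞) (n : ℕ) :
    ∑' x : {x // ℓ x < n ∧ Q x}, F x
      = ∑ k ∈ Finset.range n, ∑' x : {x // ℓ x = k ∧ Q x}, F x := by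
  rw [← Fin.sum_univ_eq_sum_range (fun k => ∑' x : {x // ℓ x = k ∧ Q x}, F x) n,
    ← tsum_fintype (L := .unconditional _),
    ← ENNReal.tsum_sigma' fun y : Σ k : Fin n, {x // ℓ x = k ∧ Q x} => F y.2]
  exact ((sigmaFinLengthEquiv ℓ Q n).symm.tsum_eq fun x => F x).symm

end LengthGrading

theorem ENNReal.tsum_eq_iff_tendsto_zero_of_sum_range_add_eq {C D : ℕ → ℝ≥0∞} {E : ℝ≥0∞}
    (hE : E ≠ ⊤) (h : ∀ n, ∑ k ∈ Finset.range n, C k + D n = E) :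
    ∑' k, C k = E ↔ Tendsto D atTop (nhds 0) := by
  have hsum_le : ∑' k, C k ≤ E :=
    ENNReal.tsum_le_of_sum_range_le fun n => (h n).le.trans' le_self_add
  have hD : ∀ n, D n = E - ∑ k ∈ Finset.range n, C k := fun n =>
    ENNReal.eq_sub_of_add_eq (ne_top_of_le_ne_top hE ((h n).le.trans' le_self_add))
      ((add_comm _ _).trans (h n))
  have hlim : Tendsto D atTop (nhds (E - ∑' k, C k)) := by
    rw [funext hD]
    exact ENNReal.Tendsto.sub tendsto_const_nhds (ENNReal.tendsto_nat_tsum C) (Or.inl hE)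
  constructor
  · intro hC
    rwa [hC, tsub_self] at hlim
  · intro hD0
    have : E - ∑' k, C k = 0 := tendsto_nhds_unique hlim hD0
    exact le_antisymm hsum_le (tsub_eq_zero_iff_le.mp this)

section PathTree

variable {α : Type*} (P : α → Prop)

def appendSingletonEquiv (n : ℕ) :
    {p : List α // p.length = n ∧ ∀ j ∈ p, P j} × {j // P j} ≃
      {p : List α // p.length = n + 1 ∧ ∀ j ∈ p, P j} where
  toFun x := ⟨x.1.1 ++ [x.2.1], by simp [x.1.2.1], by
    simpa [or_imp, forall_and] using ⟨x.1.2.2, x.2.2⟩⟩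
  invFun q :=
    have hq : q.1 ≠ [] := List.ne_nil_of_length_eq_add_one q.2.1
    (⟨q.1.dropLast, by simp [q.2.1], fun j hj => q.2.2 j (List.dropLast_subset _ hj)⟩,
      ⟨q.1.getLast hq, q.2.2 _ (List.getLast_mem hq)⟩)
  left_inv _ := by ext <;> simp
  right_inv q := Subtype.ext (List.dropLast_append_getLast _)

variable {P}

theorem tsum_length_succ (F : List α → ℝ≥0∞) (n : ℕ) :
    ∑' p : {p : List α // p.length = n + 1 ∧ ∀ j ∈ p, P j}, F p
      = ∑' p : {p : List α // p.length = n ∧ ∀ j ∈ p, P j},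
          ∑' j : {j // P j}, F (p ++ [(j : α)]) := by
  rw [← ENNReal.tsum_prod]
  exact ((appendSingletonEquiv P n).tsum_eq fun p => F p).symm

theorem tsum_length_zero (F : List α → ℝ≥0∞) :
    ∑' p : {p : List α // p.length = 0 ∧ ∀ j ∈ p, P j}, F p = F [] := by
  have hnil : ∀ p : {p : List α // p.length = 0 ∧ ∀ j ∈ p, P j}, p.1 = [] :=
    fun p => List.length_eq_zero_iff.mp p.2.1
  rw [tsum_eq_single ⟨[], rfl, by simp⟩ fun p hp => absurd (Subtype.ext (hnil p)) hp]

theorem tsum_length_lt_add_tsum_length_eq {S U : List α → ℝ≥0∞}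
    (hU : ∀ p, U p = S p + ∑' j : {j // P j}, U (p ++ [(j : α)])) (n : ℕ) :
    ∑' p : {p : List α // p.length < n ∧ ∀ j ∈ p, P j}, S p
      + ∑' p : {p : List α // p.length = n ∧ ∀ j ∈ p, P j}, U p = U [] := by
  rw [tsum_subtype_lt_eq_sum_range]
  induction n with
  | zero => simp [tsum_length_zero]
  | succ n ih =>
    have hlayer : ∑' p : {p : List α // p.length = n ∧ ∀ j ∈ p, P j}, U p
        = ∑' p : {p : List α // p.length = n ∧ ∀ j ∈ p, P j}, S p
          + ∑' p : {p : List α // p.length = n + 1 ∧ ∀ j ∈ p, P j}, U p := by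
      rw [tsum_length_succ, ← ENNReal.tsum_add]
      exact tsum_congr fun p => hU p
    rw [Finset.sum_range_succ, add_assoc, ← hlayer, ih]

theorem tsum_eq_iff_tendsto_tsum_length_zero {S U : List α → ℝ≥0∞}
    (hU : ∀ p, U p = S p + ∑' j : {j // P j}, U (p ++ [(j : α)])) (hU_nil : U [] ≠ ⊤) :
    ∑' p : {p : List α // ∀ j ∈ p, P j}, S p = U [] ↔
      Tendsto (fun n => ∑' p : {p : List α // p.length = n ∧ ∀ j ∈ p, P j}, U p)
        atTop (nhds 0) := by
  rw [tsum_subtype_eq_tsum_tsum_length List.length]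
  refine ENNReal.tsum_eq_iff_tendsto_zero_of_sum_range_add_eq hU_nil fun n => ?_
  rw [← tsum_subtype_lt_eq_sum_range]
  exact tsum_length_lt_add_tsum_length_eq hU n

end PathTree

section Scattering

variable {ψ f : ℝ → ℂ}

theorem scatU_append (p : List ℤ) (j : ℤ) :
    scatU ψ (p ++ [j]) f = fun t => (‖conv (scatU ψ p f) (dil ψ j) t‖ : ℂ) := by
  simp [scatU, List.foldl_append]

theorem integrable_dil {g : ℝ → ℂ} (hg : Integrable g) (j : ℤ) : Integrable (dil g j) :=
  (hg.comp_mul_left' (zpow_ne_zero _ two_ne_zero)).const_mul _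

theorem memLp_scatU (hψ : Integrable ψ) (hf : MemLp f 2) (p : List ℤ) :
    MemLp (scatU ψ p f) 2 := by
  induction p using List.reverseRecOn with
  | nil => exact hf
  | append_singleton p j ih =>
    rw [scatU_append]
    exact (memLp_two_conv ih (integrable_dil hψ j)).norm.ofReal

theorem scatU_im (hf : ∀ t, (f t).im = 0) (p : List ℤ) (t : ℝ) : (scatU ψ p f t).im = 0 := by
  cases p using List.reverseRecOn with
  | nil => exact hf t
  | append_singleton p j => simp [scatU_append]

theorem ofReal_integral_norm_sq_scatU_eq {φ : ℝ → ℂ} {J : ℤ} (hψ : Integrable ψ)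
    (hLP : ∀ (f : ℝ → ℂ), MemLp f 2 → (∀ t, (f t).im = 0) → ∀ J : ℤ,
      ENNReal.ofReal (∫ t, ‖conv f (dil φ J) t‖ ^ 2)
          + ∑' j : {j : ℤ // j ≤ J}, ENNReal.ofReal (∫ t, ‖conv f (dil ψ j) t‖ ^ 2)
        = ENNReal.ofReal (∫ t, ‖f t‖ ^ 2))
    (hf : MemLp f 2) (hf_real : ∀ t, (f t).im = 0) (p : List ℤ) :
    ENNReal.ofReal (∫ t, ‖scatU ψ p f t‖ ^ 2)
      = ENNReal.ofReal (∫ t, ‖conv (scatU ψ p f) (dil φ J) t‖ ^ 2)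
        + ∑' j : {j : ℤ // j ≤ J}, ENNReal.ofReal (∫ t, ‖scatU ψ (p ++ [(j : ℤ)]) f t‖ ^ 2) := by
  simp only [scatU_append, Complex.norm_real, norm_norm]
  exact (hLP _ (memLp_scatU hψ hf p) (scatU_im hf_real p) J).symm

end Scattering

theorem stmt18_general (ψ : ℝ → ℂ) (hψ1 : Integrable ψ)
    (φ : ℝ → ℂ)
    (hLPid : ∀ (f : ℝ → ℂ), MemLp f 2 → (∀ t, (f t).im = 0) → ∀ J : ℤ,
      ENNReal.ofReal (∫ t, ‖conv f (dil φ J) t‖ ^ 2)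
          + ∑' j : {j : ℤ // j ≤ J}, ENNReal.ofReal (∫ t, ‖conv f (dil ψ j) t‖ ^ 2)
        = ENNReal.ofReal (∫ t, ‖f t‖ ^ 2))
    (J : ℤ) (f : ℝ → ℂ) (hf : MemLp f 2) (hfreal : ∀ t, (f t).im = 0) :
    (∀ n : ℕ,
      (∑' p : {p : List ℤ // p.length < n ∧ ∀ j ∈ p, j ≤ J},
          ENNReal.ofReal (∫ t, ‖conv (scatU ψ p f) (dil φ J) t‖ ^ 2))
        + (∑' p : {p : List ℤ // p.length = n ∧ ∀ j ∈ p, j ≤ J},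
            ENNReal.ofReal (∫ t, ‖scatU ψ p f t‖ ^ 2))
      = ENNReal.ofReal (∫ t, ‖f t‖ ^ 2))
    ∧ ((∑' p : {p : List ℤ // ∀ j ∈ p, j ≤ J},
          ENNReal.ofReal (∫ t, ‖conv (scatU ψ p f) (dil φ J) t‖ ^ 2))
          = ENNReal.ofReal (∫ t, ‖f t‖ ^ 2)
        ↔ Tendsto (fun n : ℕ =>
            ∑' p : {p : List ℤ // p.length = n ∧ ∀ j ∈ p, j ≤ J},
              ENNReal.ofReal (∫ t, ‖scatU ψ p f t‖ ^ 2)) atTop (nhds 0)) := by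
  have hU := ofReal_integral_norm_sq_scatU_eq (J := J) hψ1 hLPid hf hfreal
  exact ⟨tsum_length_lt_add_tsum_length_eq hU,
    tsum_eq_iff_tendsto_tsum_length_zero hU ofReal_ne_top⟩

/-- If the Littlewood–Paley identity
`‖f⋆φ_J‖₂² + Σ_{j≤J}‖f⋆ψ_j‖₂² = ‖f‖₂²` holds for all real `f ∈ L²` and all `J`, then for
every `n` and real `f ∈ L²`,
`Σ_{|p|<n}‖S_J[p]f‖₂² + Σ_{|p|=n}‖U[p]f‖₂² = ‖f‖₂²`; in particular
`Σ_{p∈P_J}‖S_J[p]f‖₂² = ‖f‖₂²` iff `Σ_{|p|=n}‖U[p]f‖₂² → 0`. -/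
theorem stmt18 (ψ : ℝ → ℂ) (hψ1 : Integrable ψ) (hψ2 : MemLp ψ 2)
    (hψ0 : ∫ t, ψ t = 0)
    (φ : ℝ → ℂ) (hφ1 : Integrable φ) (hφ2 : MemLp φ 2) (hφ0 : 𝓕 φ 0 = 1)
    (hLPid : ∀ (f : ℝ → ℂ), MemLp f 2 → (∀ t, (f t).im = 0) → ∀ J : ℤ,
      ENNReal.ofReal (∫ t, ‖conv f (dil φ J) t‖ ^ 2)
          + ∑' j : {j : ℤ // j ≤ J}, ENNReal.ofReal (∫ t, ‖conv f (dil ψ j) t‖ ^ 2)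
        = ENNReal.ofReal (∫ t, ‖f t‖ ^ 2))
    (J : ℤ) (f : ℝ → ℂ) (hf : MemLp f 2) (hfreal : ∀ t, (f t).im = 0) :
    (∀ n : ℕ,
      (∑' p : {p : List ℤ // p.length < n ∧ ∀ j ∈ p, j ≤ J},
          ENNReal.ofReal (∫ t, ‖conv (scatU ψ p f) (dil φ J) t‖ ^ 2))
        + (∑' p : {p : List ℤ // p.length = n ∧ ∀ j ∈ p, j ≤ J},
            ENNReal.ofReal (∫ t, ‖scatU ψ p f t‖ ^ 2))
      = ENNReal.ofReal (∫ t, ‖f t‖ ^ 2))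
    ∧ ((∑' p : {p : List ℤ // ∀ j ∈ p, j ≤ J},
          ENNReal.ofReal (∫ t, ‖conv (scatU ψ p f) (dil φ J) t‖ ^ 2))
          = ENNReal.ofReal (∫ t, ‖f t‖ ^ 2)
        ↔ Tendsto (fun n : ℕ =>
            ∑' p : {p : List ℤ // p.length = n ∧ ∀ j ∈ p, j ≤ J},
              ENNReal.ofReal (∫ t, ‖scatU ψ p f t‖ ^ 2)) atTop (nhds 0)) :=
  stmt18_general ψ hψ1 φ hLPid J f hf hfreal
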